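/- arXiv:1810.02893 — 3 statements merged into one kernel-verified Lean document; each statement's English description precedes it below -/
import Mathlib

section
/- Let d, n ≥ 1, let A : (ℝ^d)^n → (ℝ^d)^n be a surjective linear isometry (representing the composition F ∘ P_j of the unitary imaging map and instrument setting), let b_1, …, b_n > 0, and let C = {z ∈ (ℝ^d)^n : ‖(A z)_i‖ = b_i for all i}. Then for every z ∈ (ℝ^d)^n, y ∈ P_C(z) if and only if y = A*(ŷ) for some ŷ ∈ (ℝ^d)^n satisfying, for each i: ŷ_i = b_i · (A z)_i / ‖(A z)_i‖ when (A z)_i ≠ 0, and ‖ŷ_i‖ = b_i when (A z)_i = 0. -/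
noncomputable section

/-- The product space `(ℝ^d)^n` with the Euclidean norm `‖z‖² = Σᵢ ‖zᵢ‖²`. -/
abbrev Esp (d n : ℕ) := PiLp 2 (fun _ : Fin n => EuclideanSpace ℝ (Fin d))

/-- The (possibly set-valued) projector onto a set `C`:
`P_C(z) = {y ∈ C : ‖y − z‖ = dist(z, C)}`. -/
def proj {H : Type*} [NormedAddCommGroup H] (C : Set H) (z : H) : Set H :=
  {y | y ∈ C ∧ dist z y = Metric.infDist z C}

lemma sphere_dist_lower {E : Type*} [NormedAddCommGroup E] [InnerProductSpace ℝ E]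
    (x y : E) (b : ℝ) (hy : ‖y‖ = b) : |‖x‖ - b| ≤ dist x y := by
  rw [dist_eq_norm, ← hy]; exact abs_norm_sub_norm_le x y

lemma sphere_dist_eq_iff {E : Type*} [NormedAddCommGroup E] [InnerProductSpace ℝ E]
    (x y : E) (b : ℝ) (hy : ‖y‖ = b) (hx : x ≠ 0) :
    dist x y = |‖x‖ - b| ↔ y = (b / ‖x‖) • x := by
  have hxn : (0:ℝ) < ‖x‖ := norm_pos_iff.mpr hx
  constructor
  · intro h
    have hsq : ‖x - y‖ ^ 2 = (‖x‖ - b) ^ 2 := by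
      rw [← dist_eq_norm, h, sq_abs]
    rw [norm_sub_sq_real, hy] at hsq
    have hinner : (inner ℝ x y : ℝ) = ‖x‖ * ‖y‖ := by rw [hy]; nlinarith
    have h1 := inner_eq_norm_mul_iff_real.mp hinner
    have h2 : y = (‖x‖)⁻¹ • (‖y‖ • x) := by
      rw [h1]; rw [smul_smul, inv_mul_cancel₀ hxn.ne', one_smul]
    rw [h2, hy, smul_smul, div_eq_inv_mul]
  · rintro rfl
    rw [dist_eq_norm]
    have h3 : x - (b / ‖x‖) • x = (1 - b / ‖x‖) • x := by
      rw [sub_smul, one_smul]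
    rw [h3, norm_smul, Real.norm_eq_abs]
    rw [show |1 - b / ‖x‖| * ‖x‖ = |(1 - b / ‖x‖) * ‖x‖| by
      rw [abs_mul, abs_of_nonneg hxn.le]]
    congr 1
    field_simp

lemma Esp.dist_eq' {d n : ℕ} (f g : Esp d n) :
    dist f g = Real.sqrt (∑ i, dist (f i) (g i) ^ 2) := by
  rw [PiLp.dist_eq_sum (p := 2) (by norm_num), Real.sqrt_eq_rpow]
  norm_num

/-- Projection onto a product of spheres. -/
lemma proj_prod_spheres {d n : ℕ} (hd : 1 ≤ d) (b : Fin n → ℝ) (hb : ∀ i, 0 < b i)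
    (z y : Esp d n) :
    y ∈ proj {w : Esp d n | ∀ i, ‖w i‖ = b i} z ↔
      ∀ i, (z i ≠ 0 → y i = (b i / ‖z i‖) • z i) ∧ (z i = 0 → ‖y i‖ = b i) := by
  classical
  set S : Set (Esp d n) := {w | ∀ i, ‖w i‖ = b i} with hS
  set e : EuclideanSpace ℝ (Fin d) := EuclideanSpace.single ⟨0, hd⟩ 1 with he_def
  have he : ‖e‖ = 1 := by simp [he_def]
  set y₀ : Esp d n := WithLp.toLp 2 (fun i => if z i = 0 then (b i) • e else (b i / ‖z i‖) • z i) with hy₀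
  have hy₀S : y₀ ∈ S := by
    intro i
    by_cases h : z i = 0
    · simp only [hy₀, PiLp.toLp_apply, if_pos h, norm_smul, Real.norm_eq_abs, he, mul_one,
        abs_of_pos (hb i)]
    · have hzn : (0:ℝ) < ‖z i‖ := norm_pos_iff.mpr h
      simp only [hy₀, PiLp.toLp_apply, if_neg h, norm_smul, Real.norm_eq_abs,
        abs_of_pos (div_pos (hb i) hzn)]
      field_simp
  have hy₀d : ∀ i, dist (z i) (y₀ i) = |‖z i‖ - b i| := by
    intro i
    by_cases h : z i = 0
    · simp only [hy₀, PiLp.toLp_apply, if_pos h, h, ↓reduceIte]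
      rw [dist_comm, dist_zero_right, norm_smul, Real.norm_eq_abs, he, mul_one,
        norm_zero, abs_sub_comm, sub_zero]
    · simp only [hy₀, PiLp.toLp_apply, if_neg h]
      have hzn : (0:ℝ) < ‖z i‖ := norm_pos_iff.mpr h
      have hnorm : ‖(b i / ‖z i‖) • z i‖ = b i := by
        rw [norm_smul, Real.norm_eq_abs, abs_of_pos (div_pos (hb i) hzn)]
        field_simp
      exact (sphere_dist_eq_iff (z i) _ (b i) hnorm h).mpr rfl
  have key : ∀ w ∈ S, ∀ i, (‖z i‖ - b i) ^ 2 ≤ dist (z i) (w i) ^ 2 := by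
    intro w hw i
    have h1 := sphere_dist_lower (z i) (w i) (b i) (hw i)
    calc (‖z i‖ - b i) ^ 2 = |‖z i‖ - b i| ^ 2 := (sq_abs _).symm
      _ ≤ dist (z i) (w i) ^ 2 := by
          exact pow_le_pow_left₀ (abs_nonneg _) h1 2
  have hDle : ∀ w ∈ S, Real.sqrt (∑ i, (‖z i‖ - b i) ^ 2) ≤ dist z w := by
    intro w hw
    rw [Esp.dist_eq']
    exact Real.sqrt_le_sqrt (Finset.sum_le_sum fun i _ => key w hw i)
  have hy₀dist : dist z y₀ = Real.sqrt (∑ i, (‖z i‖ - b i) ^ 2) := by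
    rw [Esp.dist_eq']
    congr 1
    exact Finset.sum_congr rfl fun i _ => by rw [hy₀d i, sq_abs]
  have hinf : Metric.infDist z S = Real.sqrt (∑ i, (‖z i‖ - b i) ^ 2) := by
    refine le_antisymm (hy₀dist ▸ Metric.infDist_le_dist_of_mem hy₀S) ?_
    rw [Metric.infDist_eq_iInf]
    have : Nonempty S := ⟨⟨y₀, hy₀S⟩⟩
    exact le_ciInf fun w => hDle w w.2
  constructor
  · rintro ⟨hyS, hyd⟩
    have hsum : ∑ i, dist (z i) (y i) ^ 2 = ∑ i, (‖z i‖ - b i) ^ 2 := by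
      have h1 : Real.sqrt (∑ i, dist (z i) (y i) ^ 2)
          = Real.sqrt (∑ i, (‖z i‖ - b i) ^ 2) := by
        rw [← Esp.dist_eq', hyd, hinf]
      exact (Real.sqrt_inj (Finset.sum_nonneg fun i _ => sq_nonneg _)
        (Finset.sum_nonneg fun i _ => sq_nonneg _)).mp h1
    have heach : ∀ i ∈ Finset.univ, (‖z i‖ - b i) ^ 2 = dist (z i) (y i) ^ 2 :=
      (Finset.sum_eq_sum_iff_of_le fun i _ => key y hyS i).mp hsum.symm
    intro i
    refine ⟨fun hz => ?_, fun hz => hyS i⟩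
    have hdi : dist (z i) (y i) = |‖z i‖ - b i| := by
      have h2 := (heach i (Finset.mem_univ i)).symm
      calc dist (z i) (y i) = Real.sqrt (dist (z i) (y i) ^ 2) :=
            (Real.sqrt_sq dist_nonneg).symm
        _ = Real.sqrt ((‖z i‖ - b i) ^ 2) := by rw [h2]
        _ = |‖z i‖ - b i| := Real.sqrt_sq_eq_abs _
    exact (sphere_dist_eq_iff (z i) (y i) (b i) (hyS i) hz).mp hdi
  · intro h
    have hyS : y ∈ S := by
      intro i
      by_cases hz : z i = 0
      · exact (h i).2 hz
      · have hzn : (0:ℝ) < ‖z i‖ := norm_pos_iff.mpr hz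
        rw [(h i).1 hz, norm_smul, Real.norm_eq_abs, abs_of_pos (div_pos (hb i) hzn)]
        field_simp
    refine ⟨hyS, ?_⟩
    have hyd : ∀ i, dist (z i) (y i) = |‖z i‖ - b i| := by
      intro i
      by_cases hz : z i = 0
      · rw [hz, dist_comm, dist_zero_right, (h i).2 hz, norm_zero, zero_sub, abs_neg,
          abs_of_pos (hb i)]
      · exact (sphere_dist_eq_iff (z i) (y i) (b i) (hyS i) hz).mpr ((h i).1 hz)
    rw [Esp.dist_eq', hinf]
    congr 1
    exact Finset.sum_congr rfl fun i _ => by rw [hyd i, sq_abs]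

theorem projection_onto_measurement_set (d n : ℕ) (hd : 1 ≤ d) (hn : 1 ≤ n)
    (A : Esp d n ≃ₗᵢ[ℝ] Esp d n)
    (b : Fin n → ℝ) (hb : ∀ i, 0 < b i)
    (C : Set (Esp d n))
    (hC : C = {z : Esp d n | ∀ i, ‖A z i‖ = b i}) :
    ∀ z y : Esp d n,
      y ∈ proj C z ↔
        ∃ yhat : Esp d n, y = A.symm yhat ∧
          ∀ i, (A z i ≠ 0 → yhat i = (b i / ‖A z i‖) • A z i) ∧
               (A z i = 0 → ‖yhat i‖ = b i) := by
  intro z y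
  set S : Set (Esp d n) := {w : Esp d n | ∀ i, ‖w i‖ = b i} with hSdef
  have hCS : C = A.symm '' S := by
    rw [hC]
    ext x
    constructor
    · intro hx
      exact ⟨A x, hx, by simp⟩
    · rintro ⟨w, hw, rfl⟩
      simpa [hSdef] using hw
  have hinfd : Metric.infDist z C = Metric.infDist (A z) S := by
    rw [hCS]
    have := Metric.infDist_image (x := A z) (t := S) A.symm.isometry
    rw [← this]
    simp
  have hdist : dist z y = dist (A z) (A y) := (A.isometry.dist_eq _ _).symm
  have hmem : y ∈ proj C z ↔ A y ∈ proj S (A z) := by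
    unfold proj
    simp only [Set.mem_setOf_eq, hinfd, ← hdist]
    constructor
    · rintro ⟨h1, h2⟩
      refine ⟨?_, h2⟩
      rw [hC] at h1; exact h1
    · rintro ⟨h1, h2⟩
      refine ⟨?_, h2⟩
      rw [hC]; exact h1
  rw [hmem, proj_prod_spheres hd b hb (A z) (A y)]
  constructor
  · intro h
    exact ⟨A y, by simp, h⟩
  · rintro ⟨yhat, rfl, h⟩
    simpa using h
end
end

section
/- Let H be a real Hilbert space, let D ⊆ H be nonempty closed convex with metric projection P_D and reflector R_D = 2P_D − Id, let C ⊆ H be nonempty, and let λ ∈ (0,1). Define f_λ(z) = (λ/(2(1−λ))) dist²(z, D) and its proximal reflector R_1(z) = 2 prox_{f_λ}(z) − z. Then for every z ∈ H and every selection y ∈ P_C(z) (so that the reflected point is r = 2y − z), the Douglas–Rachford-type step with the proximal reflector equals the relaxed Douglas–Rachford (RAAR) step: (1/2)( R_1(r) + z ) = (λ/2)( R_D(r) + z ) + (1−λ) y. In operator form, (1/2)(R_1 R_C + Id) = (λ/2)(R_D R_C + Id) + (1−λ) P_C. -/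
noncomputable section

open scoped RealInnerProductSpace

theorem raar_is_proximal_douglas_rachford {H : Type*} [NormedAddCommGroup H]
    [InnerProductSpace ℝ H] [CompleteSpace H]
    (D : Set H) (hDne : D.Nonempty) (hDcl : IsClosed D) (hDconv : Convex ℝ D)
    (PD : H → H) (hPD : ∀ z, PD z ∈ D ∧ dist z (PD z) = Metric.infDist z D)
    (C : Set H) (hCne : C.Nonempty)
    (lam : ℝ) (hlam : lam ∈ Set.Ioo (0 : ℝ) 1)
    (f : H → ℝ)
    (hf : ∀ z, f z = (lam / (2 * (1 - lam))) * (Metric.infDist z D) ^ 2)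
    (prox : H → H)
    (hprox : ∀ w x : H,
      f (prox w) + (1 / 2) * ‖prox w - w‖ ^ 2 ≤ f x + (1 / 2) * ‖x - w‖ ^ 2) :
    ∀ z y : H, y ∈ proj C z →
      (1 / 2 : ℝ) •
          (((2 : ℝ) • prox ((2 : ℝ) • y - z) - ((2 : ℝ) • y - z)) + z) =
        (lam / 2) •
            (((2 : ℝ) • PD ((2 : ℝ) • y - z) - ((2 : ℝ) • y - z)) + z) +
          (1 - lam) • y := by
  obtain ⟨hlam0, hlam1⟩ := hlam
  have h1l : (0:ℝ) < 1 - lam := by linarith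
  haveI : Nonempty ↥D := hDne.to_subtype
  -- Key: prox w = (1 - lam) • w + lam • PD w for every w
  have key : ∀ w : H, prox w = (1 - lam) • w + lam • PD w := by
    intro w
    set p := PD w with hp
    obtain ⟨hpD, hpd⟩ := hPD w
    set x₀ : H := (1 - lam) • w + lam • p with hx₀
    set v : H := x₀ - p with hv
    have hvwp : v = (1 - lam) • (w - p) := by
      rw [hv, hx₀]; module
    -- variational inequality at p
    have hvar : ∀ q ∈ D, ⟪w - p, q - p⟫ ≤ 0 := by
      have hnorm : ‖w - p‖ = ⨅ q : D, ‖w - q‖ := by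
        rw [← dist_eq_norm, hpd, Metric.infDist_eq_iInf]
        congr 1; ext q; rw [dist_eq_norm]
      exact (norm_eq_iInf_iff_real_inner_le_zero hDconv hpD).mp hnorm
    -- subgradient inequality: d(x)^2 ≥ ‖v‖^2 + 2⟪v, x - x₀⟫
    have subgrad : ∀ x : H,
        ‖v‖ ^ 2 + 2 * ⟪v, x - x₀⟫ ≤ (Metric.infDist x D) ^ 2 := by
      intro x
      have hd0 : 0 ≤ Metric.infDist x D := Metric.infDist_nonneg
      rcases eq_or_lt_of_le (norm_nonneg v) with hn0 | hn0
      · have hv0 : v = 0 := by rw [← norm_eq_zero]; exact hn0.symm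
        rw [hv0]
        simp only [inner_zero_left, norm_zero, mul_zero, add_zero]
        nlinarith [hd0]
      · -- ‖v‖ > 0
        have hb : (⟪v, x - x₀⟫ + ‖v‖ ^ 2) / ‖v‖ ≤ Metric.infDist x D := by
          rw [Metric.infDist_eq_iInf]
          apply le_ciInf
          intro q
          rw [div_le_iff₀ hn0]
          have h1 : ⟪x - (q : H), v⟫ ≤ dist x q * ‖v‖ := by
            calc ⟪x - (q : H), v⟫ ≤ ‖x - (q : H)‖ * ‖v‖ := real_inner_le_norm _ _
            _ = dist x q * ‖v‖ := by rw [dist_eq_norm]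
          have h2 : ⟪p - (q : H), v⟫ ≥ 0 := by
            rw [hvwp, real_inner_smul_right]
            have : ⟪w - p, (q : H) - p⟫ ≤ 0 := hvar q q.2
            have h3 : ⟪p - (q : H), w - p⟫ = -⟪w - p, (q : H) - p⟫ := by
              rw [real_inner_comm]
              rw [show p - (q : H) = -((q : H) - p) by abel, inner_neg_right]
            rw [real_inner_comm] at h3 ⊢
            nlinarith
          have h4 : ⟪x₀ - p, v⟫ = ‖v‖ ^ 2 := by
            rw [← hv, real_inner_self_eq_norm_sq]
          have h5 : ⟪x - (q : H), v⟫ = ⟪x - x₀, v⟫ + ⟪x₀ - p, v⟫ + ⟪p - (q : H), v⟫ := by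
            rw [← inner_add_left, ← inner_add_left]
            congr 1; abel
          rw [real_inner_comm (x - x₀) v]
          nlinarith
        set t : ℝ := ⟪v, x - x₀⟫
        set n : ℝ := ‖v‖
        set d : ℝ := Metric.infDist x D
        have hbn : (t + n ^ 2) / n * n = t + n ^ 2 := div_mul_cancel₀ _ (ne_of_gt hn0)
        nlinarith [sq_nonneg (d - n), mul_le_mul_of_nonneg_right hb (le_of_lt hn0)]
    -- value at x₀
    have hdx₀ : Metric.infDist x₀ D = ‖v‖ := by
      have hle : Metric.infDist x₀ D ≤ ‖v‖ := by
        calc Metric.infDist x₀ D ≤ dist x₀ p := Metric.infDist_le_dist_of_mem hpD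
        _ = ‖v‖ := by rw [dist_eq_norm, hv]
      have hge : ‖v‖ ≤ Metric.infDist x₀ D := by
        have h := subgrad x₀
        simp only [sub_self, inner_zero_right, mul_zero, add_zero] at h
        nlinarith [Metric.infDist_nonneg (x := x₀) (s := D), norm_nonneg v]
      linarith
    -- growth estimate
    have grow : ∀ x : H, f x₀ + (1/2) * ‖x₀ - w‖ ^ 2 + (1/2) * ‖x - x₀‖ ^ 2
        ≤ f x + (1/2) * ‖x - w‖ ^ 2 := by
      intro x
      rw [hf, hf, hdx₀]
      have hwsub : ⟪x₀ - w, x - x₀⟫ = -(lam / (1 - lam)) * ⟪v, x - x₀⟫ := by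
        have : x₀ - w = (-(lam / (1 - lam))) • v := by
          rw [hvwp, hx₀, smul_smul]
          have h6 : -(lam / (1 - lam)) * (1 - lam) = -lam := by field_simp
          rw [h6]; module
        rw [this, real_inner_smul_left]
      have hexp : ‖x - w‖ ^ 2 = ‖x - x₀‖ ^ 2 + 2 * ⟪x - x₀, x₀ - w⟫ + ‖x₀ - w‖ ^ 2 := by
        have h := norm_add_sq_real (x - x₀) (x₀ - w)
        rw [sub_add_sub_cancel] at h
        linarith
      have hsg := subgrad x
      have hmu0 : (0:ℝ) ≤ lam / (2 * (1 - lam)) := by positivity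
      have hmu : lam / (2 * (1 - lam)) * 2 = lam / (1 - lam) := by field_simp
      rw [real_inner_comm] at hexp
      nlinarith [mul_le_mul_of_nonneg_left hsg hmu0]
    -- uniqueness
    have h1 := hprox w x₀
    have h2 := grow (prox w)
    have h3 : ‖prox w - x₀‖ ^ 2 ≤ 0 := by nlinarith
    have h4 : prox w = x₀ := by
      have h5 : ‖prox w - x₀‖ ^ 2 = 0 := le_antisymm h3 (by positivity)
      have h6 := pow_eq_zero_iff (n := 2) (by norm_num) |>.mp h5
      rwa [norm_eq_zero, sub_eq_zero] at h6
    rw [h4, hx₀]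
  intro z y _
  rw [key ((2:ℝ) • y - z)]
  module
end
end

section
/- Let n ≥ 1 and 0 ≤ s ≤ n. In ℝ^n, let C_+ = {x ∈ ℝ^n : x_i ≥ 0 for all i} (so P_{C_+}(z) is the componentwise positive part z_+, with (z_+)_i = max(z_i, 0)) and let S_s = {x ∈ ℝ^n : at most s components of x are nonzero}. Then for every z ∈ ℝ^n, the composition of projectors equals the projector onto the intersection: P_{S_s}(P_{C_+}(z)) = P_{S_s ∩ C_+}(z) as sets of nearest points; that is, every nearest point of z in S_s ∩ C_+ is obtained by hard-thresholding the positive part z_+ (keeping s largest entries), and conversely. -/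
noncomputable section

private lemma dist_sq_eq {n : ℕ} (x y : EuclideanSpace ℝ (Fin n)) :
    dist x y ^ 2 = ∑ i, (x i - y i) ^ 2 := by
  rw [EuclideanSpace.dist_eq, Real.sq_sqrt (by positivity)]
  refine Finset.sum_congr rfl fun i _ => ?_
  rw [Real.dist_eq, sq_abs]

private lemma le_of_sq_le_sq' {a b : ℝ} (ha : 0 ≤ a) (hb : 0 ≤ b) (h : a ^ 2 ≤ b ^ 2) :
    a ≤ b := by
  have := Real.sqrt_le_sqrt h
  rwa [Real.sqrt_sq ha, Real.sqrt_sq hb] at this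

private lemma eq_of_sq_eq_sq' {a b : ℝ} (ha : 0 ≤ a) (hb : 0 ≤ b) (h : a ^ 2 = b ^ 2) :
    a = b :=
  le_antisymm (le_of_sq_le_sq' ha hb h.le) (le_of_sq_le_sq' hb ha h.ge)

set_option maxHeartbeats 1000000 in
theorem sparse_nonneg_projection_composition (n s : ℕ) (hn : 1 ≤ n) (hs : s ≤ n)
    (Cplus : Set (EuclideanSpace ℝ (Fin n)))
    (hCplus : Cplus = {x : EuclideanSpace ℝ (Fin n) | ∀ i, 0 ≤ x i})
    (Ss : Set (EuclideanSpace ℝ (Fin n)))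
    (hSs : Ss = {x : EuclideanSpace ℝ (Fin n) | Set.ncard {i | x i ≠ 0} ≤ s}) :
    ∀ z : EuclideanSpace ℝ (Fin n),
      proj Cplus z = {(WithLp.toLp 2 (fun i => max (z i) 0) : EuclideanSpace ℝ (Fin n))} ∧
      proj Ss (WithLp.toLp 2 (fun i => max (z i) 0) : EuclideanSpace ℝ (Fin n)) =
        proj (Ss ∩ Cplus) z := by
  classical
  intro z
  set w : EuclideanSpace ℝ (Fin n) := WithLp.toLp 2 (fun i => max (z i) 0) with hw
  have hwi : ∀ i, w i = max (z i) 0 := fun i => rfl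
  have hwnn : ∀ i, 0 ≤ w i := fun i => by rw [hwi]; exact le_max_right _ _
  have hwC : w ∈ Cplus := by rw [hCplus]; exact hwnn
  have hcont : ∀ i, Continuous (fun x : EuclideanSpace ℝ (Fin n) => x i) :=
    fun i => PiLp.continuous_apply 2 _ i
  -- membership of 0
  have h0C : (0 : EuclideanSpace ℝ (Fin n)) ∈ Cplus := by
    rw [hCplus]; intro i; simp
  have h0S : (0 : EuclideanSpace ℝ (Fin n)) ∈ Ss := by
    rw [hSs]
    have : {i : Fin n | (0 : EuclideanSpace ℝ (Fin n)) i ≠ 0} = ∅ := by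
      ext i; simp
    simp [this]
  -- closedness
  have hCc : IsClosed Cplus := by
    rw [hCplus]
    have : {x : EuclideanSpace ℝ (Fin n) | ∀ i, 0 ≤ x i} =
        ⋂ i, {x : EuclideanSpace ℝ (Fin n) | 0 ≤ x i} := by
      ext x; simp
    rw [this]
    exact isClosed_iInter fun i =>
      isClosed_le continuous_const (hcont i)
  have hSc : IsClosed Ss := by
    have hSeq : Ss = ⋃ (T : Finset (Fin n)) (_ : T.card ≤ s),
        {x : EuclideanSpace ℝ (Fin n) | ∀ i, i ∉ T → x i = 0} := by
      rw [hSs]; ext x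
      simp only [Set.mem_setOf_eq, Set.mem_iUnion]
      constructor
      · intro hx
        refine ⟨(Set.toFinite {i | x i ≠ 0}).toFinset, ?_, ?_⟩
        · rwa [← Set.ncard_eq_toFinset_card _ (Set.toFinite _)]
        · intro i hi
          by_contra h
          exact hi ((Set.Finite.mem_toFinset _).2 h)
      · rintro ⟨T, hT, hx⟩
        calc {i | x i ≠ 0}.ncard ≤ (T : Set (Fin n)).ncard := by
              refine Set.ncard_le_ncard ?_ (Set.toFinite _)
              intro i hi
              by_contra h
              exact hi (hx i h)
          _ = T.card := Set.ncard_coe_finset T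
          _ ≤ s := hT
    rw [hSeq]
    refine isClosed_iUnion_of_finite fun T => isClosed_iUnion_of_finite fun _ => ?_
    have : {x : EuclideanSpace ℝ (Fin n) | ∀ i, i ∉ T → x i = 0} =
        ⋂ i, ⋂ (_ : i ∉ T), {x : EuclideanSpace ℝ (Fin n) | x i = 0} := by
      ext x; simp
    rw [this]
    exact isClosed_iInter fun i => isClosed_iInter fun _ =>
      isClosed_eq (hcont i) continuous_const
  have hSCc : IsClosed (Ss ∩ Cplus) := hSc.inter hCc
  -- the expansion identity
  have K : ∀ y : EuclideanSpace ℝ (Fin n),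
      dist z y ^ 2 = dist z w ^ 2 + dist w y ^ 2 +
        2 * ∑ i, (z i - w i) * (w i - y i) := by
    intro y
    rw [dist_sq_eq, dist_sq_eq, dist_sq_eq, Finset.mul_sum, ← Finset.sum_add_distrib,
      ← Finset.sum_add_distrib]
    exact Finset.sum_congr rfl fun i _ => by ring
  -- cross term nonneg on Cplus
  have cNN : ∀ y ∈ Cplus, 0 ≤ ∑ i, (z i - w i) * (w i - y i) := by
    intro y hy
    rw [hCplus] at hy
    refine Finset.sum_nonneg fun i _ => ?_
    have := hy i
    rw [hwi]
    rcases le_total (z i) 0 with h | h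
    · rw [max_eq_right h]; nlinarith
    · rw [max_eq_left h]; nlinarith
  -- cross term zero when y i ∈ {0, w i}
  have cZero : ∀ y : EuclideanSpace ℝ (Fin n), (∀ i, y i = 0 ∨ y i = w i) →
      ∑ i, (z i - w i) * (w i - y i) = 0 := by
    intro y hy
    refine Finset.sum_eq_zero fun i _ => ?_
    rcases le_total (z i) 0 with h | h
    · have hw0 : w i = 0 := by rw [hwi]; exact max_eq_right h
      rcases hy i with h0 | h0 <;> rw [h0, hw0] <;> ring
    · have hwz : w i = z i := by rw [hwi]; exact max_eq_left h
      rw [hwz]; ring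
  ------------------------------------------------------------------
  -- Part 1 : proj Cplus z = {w}
  ------------------------------------------------------------------
  have hle1 : ∀ y ∈ Cplus, dist z w ≤ dist z y := by
    intro y hy
    rw [hCplus] at hy
    refine le_of_sq_le_sq' dist_nonneg dist_nonneg ?_
    rw [dist_sq_eq, dist_sq_eq]
    refine Finset.sum_le_sum fun i _ => ?_
    have := hy i
    rw [hwi]
    rcases le_total (z i) 0 with h | h
    · rw [max_eq_right h]; nlinarith
    · rw [max_eq_left h]; nlinarith
  have hinf1 : Metric.infDist z Cplus = dist z w := by
    obtain ⟨y₀, hy₀, he⟩ := hCc.exists_infDist_eq_dist ⟨w, hwC⟩ z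
    exact le_antisymm (Metric.infDist_le_dist_of_mem hwC) (he ▸ hle1 y₀ hy₀)
  have part1 : proj Cplus z = {w} := by
    ext y
    simp only [proj, Set.mem_setOf_eq, Set.mem_singleton_iff]
    constructor
    · rintro ⟨hyC, hyd⟩
      have hynn : ∀ i, 0 ≤ y i := by rw [hCplus] at hyC; exact hyC
      have hsum : ∑ i, (z i - y i) ^ 2 = ∑ i, (z i - w i) ^ 2 := by
        rw [← dist_sq_eq, ← dist_sq_eq, hyd, hinf1]
      by_contra hne
      have hex : ∃ i, y i ≠ w i := by
        by_contra h
        push_neg at h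
        exact hne (PiLp.ext h)
      obtain ⟨i, hi⟩ := hex
      have hterm : ∀ j ∈ Finset.univ, (z j - w j) ^ 2 ≤ (z j - y j) ^ 2 := by
        intro j _
        have := hynn j
        rw [hwi]
        rcases le_total (z j) 0 with h | h
        · rw [max_eq_right h]; nlinarith
        · rw [max_eq_left h]; nlinarith
      have hstrict : (z i - w i) ^ 2 < (z i - y i) ^ 2 := by
        have := hynn i
        rw [hwi] at hi ⊢
        rcases le_total (z i) 0 with h | h
        · rw [max_eq_right h] at hi ⊢
          have : 0 < y i := lt_of_le_of_ne (hynn i) (Ne.symm hi)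
          nlinarith
        · rw [max_eq_left h] at hi ⊢
          have : (z i - y i) ≠ 0 := fun hc => hi (by linarith [sub_eq_zero.1 hc])
          have h2 : 0 < (z i - y i) ^ 2 := by positivity
          nlinarith
      have := Finset.sum_lt_sum hterm ⟨i, Finset.mem_univ i, hstrict⟩
      linarith [hsum]
    · rintro rfl
      exact ⟨hwC, hinf1.symm⟩
  ------------------------------------------------------------------
  -- Part 2
  ------------------------------------------------------------------
  -- hard-thresholding property of minimizers over Ss
  have HT : ∀ y, y ∈ Ss → dist w y = Metric.infDist w Ss →
      ∀ i, y i = 0 ∨ y i = w i := by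
    intro y hyS hyd i
    by_cases h0 : y i = 0
    · exact Or.inl h0
    right
    set y' : EuclideanSpace ℝ (Fin n) := WithLp.toLp 2 (fun j => if y j = 0 then 0 else w j) with hy'
    have hy'i : ∀ j, y' j = if y j = 0 then 0 else w j := fun j => rfl
    have hy'S : y' ∈ Ss := by
      rw [hSs] at hyS ⊢
      refine le_trans (Set.ncard_le_ncard ?_ (Set.toFinite _)) hyS
      intro j hj
      simp only [Set.mem_setOf_eq] at hj ⊢
      intro h
      exact hj (by rw [hy'i, if_pos h])
    have hterm : ∀ j ∈ Finset.univ, (w j - y' j) ^ 2 ≤ (w j - y j) ^ 2 := by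
      intro j _
      rw [hy'i]
      by_cases hj : y j = 0
      · rw [if_pos hj, hj]
      · rw [if_neg hj]
        simp
        positivity
    have hle' : dist w y' ≤ dist w y := by
      refine le_of_sq_le_sq' dist_nonneg dist_nonneg ?_
      rw [dist_sq_eq, dist_sq_eq]
      exact Finset.sum_le_sum hterm
    have heq : dist w y' = dist w y :=
      le_antisymm hle' (hyd ▸ Metric.infDist_le_dist_of_mem hy'S)
    have hsum : ∑ j, (w j - y' j) ^ 2 = ∑ j, (w j - y j) ^ 2 := by
      rw [← dist_sq_eq, ← dist_sq_eq, heq]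
    by_contra hne
    have hstrict : (w i - y' i) ^ 2 < (w i - y i) ^ 2 := by
      rw [hy'i, if_neg h0]
      have : (w i - y i) ≠ 0 := fun hc => hne ((sub_eq_zero.1 hc).symm)
      have h2 : 0 < (w i - y i) ^ 2 := by positivity
      simpa using h2
    have := Finset.sum_lt_sum hterm ⟨i, Finset.mem_univ i, hstrict⟩
    linarith [hsum]
  have HTC : ∀ y : EuclideanSpace ℝ (Fin n), (∀ i, y i = 0 ∨ y i = w i) → y ∈ Cplus := by
    intro y hy
    rw [hCplus]
    intro i
    rcases hy i with h | h
    · rw [h]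
    · rw [h]; exact hwnn i
  -- minimizers
  obtain ⟨a, haS, had⟩ := hSc.exists_infDist_eq_dist ⟨0, h0S⟩ w
  obtain ⟨b, hbSC, hbd⟩ := hSCc.exists_infDist_eq_dist ⟨0, h0S, h0C⟩ z
  have haHT : ∀ i, a i = 0 ∨ a i = w i := HT a haS had.symm
  have haC : a ∈ Cplus := HTC a haHT
  have hca : ∑ i, (z i - w i) * (w i - a i) = 0 := cZero a haHT
  set D1 := Metric.infDist w Ss with hD1
  set D2 := Metric.infDist z (Ss ∩ Cplus) with hD2
  have hKa : dist z a ^ 2 = dist z w ^ 2 + D1 ^ 2 := by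
    rw [K a, hca, ← had]; ring
  have hD1nn : 0 ≤ D1 := Metric.infDist_nonneg
  have hD2nn : 0 ≤ D2 := Metric.infDist_nonneg
  have hD2a : D2 ≤ dist z a := Metric.infDist_le_dist_of_mem ⟨haS, haC⟩
  have hD1b : D1 ≤ dist w b := Metric.infDist_le_dist_of_mem hbSC.1
  have hcb : 0 ≤ ∑ i, (z i - w i) * (w i - b i) := cNN b hbSC.2
  have hKb : dist z w ^ 2 + D1 ^ 2 ≤ dist z b ^ 2 := by
    have h1 : D1 ^ 2 ≤ dist w b ^ 2 := by nlinarith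
    rw [K b]; nlinarith
  have hD : D2 ^ 2 = dist z w ^ 2 + D1 ^ 2 := by
    have h1 : D2 ^ 2 ≤ dist z a ^ 2 := by nlinarith
    have h2 : dist z b ^ 2 = D2 ^ 2 := by rw [← hbd]
    nlinarith
  refine ⟨part1, ?_⟩
  ext y
  simp only [proj, Set.mem_setOf_eq, Set.mem_inter_iff]
  constructor
  · rintro ⟨hyS, hyd⟩
    have hyHT : ∀ i, y i = 0 ∨ y i = w i := HT y hyS hyd
    have hyC : y ∈ Cplus := HTC y hyHT
    have hcy : ∑ i, (z i - w i) * (w i - y i) = 0 := cZero y hyHT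
    refine ⟨⟨hyS, hyC⟩, ?_⟩
    have hsq : dist z y ^ 2 = D2 ^ 2 := by
      rw [K y, hcy, hyd, hD]; ring
    exact eq_of_sq_eq_sq' dist_nonneg hD2nn hsq
  · rintro ⟨⟨hyS, hyC⟩, hyd⟩
    refine ⟨hyS, ?_⟩
    have h1 : dist z y ^ 2 = dist z w ^ 2 + dist w y ^ 2 +
        2 * ∑ i, (z i - w i) * (w i - y i) := K y
    have h2 : dist z y ^ 2 = D2 ^ 2 := by rw [hyd]
    have h3 : 0 ≤ ∑ i, (z i - w i) * (w i - y i) := cNN y hyC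
    have h4 : D1 ≤ dist w y := Metric.infDist_le_dist_of_mem hyS
    have h5 : dist w y ^ 2 ≤ D1 ^ 2 := by nlinarith
    exact le_antisymm (le_of_sq_le_sq' dist_nonneg hD1nn h5) h4
end
end
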